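/- arXiv:1711.03715 — 2 statements merged into one kernel-verified Lean document; each statement's English description precedes it below -/
import Mathlib

section
/- Let ε₁ > 0, let K ⊂ ℂ be compact, and let T be a closed square with sides parallel to the coordinate axes, center c_T and side length d_T, such that γ(Int(T) ∖ K) ≥ ε₁·d_T. Then for any α, β ∈ ℂ with |α| ≤ 1 and |β| ≤ 1 there exists a continuous function f : ℂ → ℂ such that: (1) sup_{z∈ℂ} |f(z)| ≤ 54/ε₁³; (2) f is analytic on ℂ ∖ E for some compact set E ⊂ Int(T) ∖ K; (3) f(z) → 0 as z → ∞; (4) lim_{z→∞} z·f(z) = α·d_T; (5) lim_{z→∞} (z − c_T)·((z − c_T)·f(z) − α·d_T) = β·d_T². -/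
/-!
Take a function `g` competing in the capacity of `Int T ∖ K` with
`g(z) = a/(z - c) + b/(z - c)² + O(|z|⁻³)` at `∞` and `|a| > ε₁ d / 2`. Its singularities lie in
the disc of radius `d` about `c`, so in the coordinate `w = 1/(z - c)` the Schwarz lemma gives
`|a| ≤ d` and the Cauchy estimate `|b| ≤ 2d²`. The Laurent coefficients of `p g + q g²` are
`p a` and `p b + q a²`; solving for `α d` and `β d²` costs `|p| + |q| ≤ 32/ε₁³` because `|a|` is
comparable to `d`. A continuous cutoff, vanishing near the singularities and equal to `1` off a
compact neighbourhood of them inside `Int T ∖ K`, makes the function continuous.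
-/

open MeasureTheory Metric Filter Polynomial

noncomputable section

/-- The analytic capacity of a set `E ⊆ ℂ`: the supremum, over compact subsets `F ⊆ E` and
admissible functions `f` (analytic off `F`, bounded by `1`, vanishing at `∞`, with
`lim_{z→∞} z·f(z)` existing), of `|lim_{z→∞} z·f(z)|`. -/
def analyticCapacity (E : Set ℂ) : ℝ :=
  sSup {r : ℝ | ∃ (F : Set ℂ) (f : ℂ → ℂ) (c : ℂ),
    F ⊆ E ∧ IsCompact F ∧ DifferentiableOn ℂ f Fᶜ ∧
    (∀ z ∉ F, ‖f z‖ ≤ 1) ∧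
    Tendsto f (cocompact ℂ) (nhds 0) ∧
    Tendsto (fun z => z * f z) (cocompact ℂ) (nhds c) ∧
    r = ‖c‖}


/-- The closed square with center `c`, sides parallel to the coordinate axes,
and side length `d`. -/
def closedSquare (c : ℂ) (d : ℝ) : Set ℂ :=
  {z : ℂ | |z.re - c.re| ≤ d / 2 ∧ |z.im - c.im| ≤ d / 2}

open Set Function Bornology Topology

structure IsAdmissible (F : Set ℂ) (g : ℂ → ℂ) (a : ℂ) : Prop where
  isCompact : IsCompact F
  differentiableOn : DifferentiableOn ℂ g Fᶜ
  norm_le_one : ∀ z ∉ F, ‖g z‖ ≤ 1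
  tendsto_zero : Tendsto g (cocompact ℂ) (𝓝 0)
  tendsto_mul : Tendsto (fun z => z * g z) (cocompact ℂ) (𝓝 a)

theorem exists_isAdmissible_of_lt_analyticCapacity {E : Set ℂ} {r : ℝ}
    (hr : r < analyticCapacity E) : ∃ F g a, F ⊆ E ∧ IsAdmissible F g a ∧ r < ‖a‖ := by
  unfold analyticCapacity at hr
  obtain ⟨_, ⟨F, g, a, hFE, hF, hg, hg1, hg0, hga, rfl⟩, hr⟩ := exists_lt_of_lt_csSup
    (by exact ⟨0, ∅, fun _ => 0, 0, by simp⟩) hr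
  exact ⟨F, g, a, hFE, ⟨hF, hg, hg1, hg0, hga⟩, hr⟩

theorem closedSquare_subset_closedBall (c : ℂ) (d : ℝ) : closedSquare c d ⊆ closedBall c d := by
  rintro z ⟨hre, him⟩
  rw [mem_closedBall, dist_eq_norm]
  calc ‖z - c‖ ≤ |(z - c).re| + |(z - c).im| := Complex.norm_le_abs_re_add_abs_im _
    _ ≤ d / 2 + d / 2 := by simpa using add_le_add hre him
    _ = d := add_halves d

theorem tendsto_const_add_inv_nhdsNE_cocompact (c : ℂ) :
    Tendsto (fun w : ℂ => c + w⁻¹) (𝓝[≠] 0) (cocompact ℂ) := by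
  rw [← cobounded_eq_cocompact]
  exact (tendsto_const_add_cobounded c).comp tendsto_inv₀_nhdsNE_zero

theorem tendsto_sub_const_inv_cocompact_nhdsNE (c : ℂ) :
    Tendsto (fun z : ℂ => (z - c)⁻¹) (cocompact ℂ) (𝓝[≠] 0) := by
  rw [← cobounded_eq_cocompact]
  exact tendsto_inv₀_cobounded'.comp (tendsto_sub_const_cobounded c)

open Classical in
/-- `g` in the coordinate `w = (z - c)⁻¹` at `∞`, with the value `g(∞) = 0` at `w = 0`. -/
def compAddInv (g : ℂ → ℂ) (c : ℂ) : ℂ → ℂ :=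
  update (fun w => g (c + w⁻¹)) 0 0

theorem compAddInv_of_ne {g : ℂ → ℂ} {c w : ℂ} (hw : w ≠ 0) : compAddInv g c w = g (c + w⁻¹) :=
  update_of_ne hw _ _

theorem dslope_compAddInv_of_ne {g : ℂ → ℂ} {c w : ℂ} (hw : w ≠ 0) :
    dslope (compAddInv g c) 0 w = (c + w⁻¹ - c) * g (c + w⁻¹) := by
  rw [dslope_of_ne _ hw, slope_def_field, compAddInv_of_ne hw, compAddInv, update_self,
    add_sub_cancel_left, sub_zero, sub_zero, div_eq_inv_mul]

theorem const_add_inv_notMem_of_subset_closedBall {F : Set ℂ} {c : ℂ} {ρ : ℝ}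
    (hF : F ⊆ closedBall c ρ) {w : ℂ} (hw₀ : w ≠ 0) (hw : w ∈ ball (0 : ℂ) ρ⁻¹) :
    c + w⁻¹ ∉ F := fun hwF => by
  have hρw : ρ < ‖w‖⁻¹ := by
    rw [mem_ball_zero_iff] at hw
    simpa using inv_strictAnti₀ (norm_pos_iff.2 hw₀) hw
  have := hF hwF
  rw [mem_closedBall, dist_eq_norm, add_sub_cancel_left, norm_inv] at this
  exact this.not_gt hρw

namespace IsAdmissible

variable {F : Set ℂ} {g : ℂ → ℂ} {a c : ℂ} {ρ : ℝ}

theorem tendsto_sub_mul (hg : IsAdmissible F g a) (c : ℂ) :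
    Tendsto (fun z => (z - c) * g z) (cocompact ℂ) (𝓝 a) := by
  simpa [sub_mul] using hg.tendsto_mul.sub (hg.tendsto_zero.const_mul c)

theorem tendsto_mul_add_mul_sq (hg : IsAdmissible F g a) (p q : ℂ) :
    Tendsto (fun z => p * g z + q * g z ^ 2) (cocompact ℂ) (𝓝 0) := by
  simpa using (hg.tendsto_zero.const_mul p).add ((hg.tendsto_zero.pow 2).const_mul q)

theorem tendsto_mul_mul_add_mul_sq (hg : IsAdmissible F g a) (p q : ℂ) :
    Tendsto (fun z => z * (p * g z + q * g z ^ 2)) (cocompact ℂ) (𝓝 (p * a)) := by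
  have := (hg.tendsto_mul.const_mul p).add ((hg.tendsto_mul.mul hg.tendsto_zero).const_mul q)
  rw [mul_zero, mul_zero, add_zero] at this
  exact this.congr fun z => by ring

variable (hg : IsAdmissible F g a) (hF : F ⊆ closedBall c ρ) (hρ : 0 < ρ)
include hg hF hρ

theorem differentiableOn_compAddInv : DifferentiableOn ℂ (compAddInv g c) (ball 0 ρ⁻¹) := by
  refine (Complex.differentiableOn_compl_singleton_and_continuousAt_iff
    (ball_mem_nhds 0 (inv_pos.2 hρ))).1 ⟨fun w ⟨hw, hw₀⟩ => ?_, ?_⟩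
  · have hw₀ : w ≠ 0 := hw₀
    have hgw : DifferentiableAt ℂ g (c + w⁻¹) :=
      hg.differentiableOn.differentiableAt <| hg.isCompact.isClosed.isOpen_compl.mem_nhds <|
        const_add_inv_notMem_of_subset_closedBall hF hw₀ hw
    refine ((hgw.comp w ((differentiableAt_inv hw₀).const_add c)).congr_of_eventuallyEq
      ?_).differentiableWithinAt
    filter_upwards [isOpen_ne.mem_nhds hw₀] with v hv using compAddInv_of_ne hv
  · unfold compAddInv
    rw [continuousAt_update_same]
    exact hg.tendsto_zero.comp (tendsto_const_add_inv_nhdsNE_cocompact c)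

theorem norm_dslope_compAddInv_le {w : ℂ} (hw : w ∈ ball (0 : ℂ) ρ⁻¹) :
    ‖dslope (compAddInv g c) 0 w‖ ≤ ρ := by
  have hmaps : MapsTo (compAddInv g c) (ball 0 ρ⁻¹) (closedBall (compAddInv g c 0) 1) := by
    intro v hv
    rw [mem_closedBall_iff_norm, compAddInv, update_self, sub_zero]
    rcases eq_or_ne v 0 with rfl | hv₀
    · simp
    · rw [update_of_ne hv₀]
      exact hg.norm_le_one _ (const_add_inv_notMem_of_subset_closedBall hF hv₀ hv)
  simpa using Complex.norm_dslope_le_div_of_mapsTo_ball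
    (differentiableOn_compAddInv hg hF hρ) hmaps hw

theorem dslope_compAddInv_zero : dslope (compAddInv g c) 0 0 = a := by
  have hcont : ContinuousAt (dslope (compAddInv g c) 0) 0 :=
    ((Complex.differentiableOn_dslope (ball_mem_nhds 0 (inv_pos.2 hρ))).2
      (differentiableOn_compAddInv hg hF hρ)).continuousOn.continuousAt
      (ball_mem_nhds 0 (inv_pos.2 hρ))
  refine tendsto_nhds_unique (hcont.tendsto.mono_left (nhdsWithin_le_nhds (s := {0}ᶜ))) ?_
  refine ((hg.tendsto_sub_mul c).comp (tendsto_const_add_inv_nhdsNE_cocompact c)).congr' ?_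
  filter_upwards [self_mem_nhdsWithin] with w hw using (dslope_compAddInv_of_ne hw).symm

theorem norm_le : ‖a‖ ≤ ρ := by
  rw [← dslope_compAddInv_zero hg hF hρ]
  exact norm_dslope_compAddInv_le hg hF hρ (mem_ball_self (inv_pos.2 hρ))

theorem exists_tendsto_sub_mul_sub :
    ∃ b, ‖b‖ ≤ 2 * ρ ^ 2 ∧
      Tendsto (fun z => (z - c) * ((z - c) * g z - a)) (cocompact ℂ) (𝓝 b) := by
  have hball : ball (0 : ℂ) ρ⁻¹ ∈ 𝓝 0 := ball_mem_nhds 0 (inv_pos.2 hρ)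
  have hh : DifferentiableOn ℂ (dslope (compAddInv g c) 0) (ball 0 ρ⁻¹) :=
    (Complex.differentiableOn_dslope hball).2 (differentiableOn_compAddInv hg hF hρ)
  -- `b` is the derivative at `0` of `w ↦ w⁻¹ g(c + w⁻¹)`, bounded by the Cauchy estimate.
  refine ⟨deriv (dslope (compAddInv g c) 0) 0, ?_, ?_⟩
  · have hmaps : MapsTo (dslope (compAddInv g c) 0) (ball 0 ρ⁻¹)
        (closedBall (dslope (compAddInv g c) 0 0) (2 * ρ)) := fun w hw => by
      rw [mem_closedBall_iff_norm, dslope_compAddInv_zero hg hF hρ, two_mul]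
      exact (norm_sub_le _ _).trans
        (add_le_add (norm_dslope_compAddInv_le hg hF hρ hw) (norm_le hg hF hρ))
    simpa [div_inv_eq_mul, sq, mul_assoc] using
      Complex.norm_deriv_le_div_of_mapsTo_ball hh hmaps (inv_pos.2 hρ)
  · refine ((hasDerivAt_iff_tendsto_slope.1 (hh.differentiableAt hball).hasDerivAt).comp
      (tendsto_sub_const_inv_cocompact_nhdsNE c)).congr' ?_
    filter_upwards [(isCompact_singleton : IsCompact {c}).compl_mem_cocompact] with z hz
    have hzc : z - c ≠ 0 := sub_ne_zero.2 hz
    rw [comp_apply, slope_def_field, dslope_compAddInv_zero hg hF hρ,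
      dslope_compAddInv_of_ne (inv_ne_zero hzc), inv_inv, add_sub_cancel, sub_zero,
      div_inv_eq_mul, mul_comm]

end IsAdmissible

theorem exists_continuous_differentiableOn_compl_eventuallyEq {F U : Set ℂ} {f : ℂ → ℂ} {M : ℝ}
    (hF : IsCompact F) (hU : IsOpen U) (hFU : F ⊆ U) (hf : DifferentiableOn ℂ f Fᶜ)
    (hM : 0 ≤ M) (hfM : ∀ z ∉ F, ‖f z‖ ≤ M) :
    ∃ f' : ℂ → ℂ, Continuous f' ∧ (∀ z, ‖f' z‖ ≤ M) ∧
      (∃ E, IsCompact E ∧ E ⊆ U ∧ DifferentiableOn ℂ f' Eᶜ) ∧ f' =ᶠ[cocompact ℂ] f := by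
  obtain ⟨δ, hδ, hδU⟩ := hF.exists_cthickening_subset_open hU hFU
  obtain ⟨χ, hχ0, hχ1, hχ01⟩ := exists_continuous_zero_one_of_isClosed
    (isClosed_cthickening (δ := δ / 2) (E := F))
    (isOpen_thickening (δ := δ) (E := F)).isClosed_compl
    (disjoint_compl_right_iff_subset.2 (cthickening_subset_thickening' hδ (half_lt_self hδ) F))
  have hχE : ∀ z ∉ cthickening δ F, ((χ z : ℂ) * f z) = f z := fun z hz => by
    rw [hχ1 (mt (thickening_subset_cthickening δ F ·) hz), Pi.one_apply, Complex.ofReal_one,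
      one_mul]
  refine ⟨fun z => χ z * f z, continuous_iff_continuousAt.2 fun z => ?_, fun z => ?_,
    ⟨cthickening δ F, hF.cthickening, hδU, ?_⟩, ?_⟩
  · by_cases hz : z ∈ thickening (δ / 2) F
    · refine continuousAt_const.congr (f := fun _ => (0 : ℂ)) ?_
      filter_upwards [isOpen_thickening.mem_nhds hz] with w hw
      rw [hχ0 (thickening_subset_cthickening _ _ hw), Pi.zero_apply, Complex.ofReal_zero, zero_mul]
    · have hzF : z ∉ F := mt (self_subset_thickening (half_pos hδ) F ·) hz
      exact (Complex.continuous_ofReal.comp χ.continuous).continuousAt.mul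
        (hf.differentiableAt (hF.isClosed.isOpen_compl.mem_nhds hzF)).continuousAt
  · dsimp only
    by_cases hz : z ∈ F
    · rw [hχ0 (self_subset_cthickening F hz), Pi.zero_apply, Complex.ofReal_zero, zero_mul,
        norm_zero]
      exact hM
    · rw [norm_mul, Complex.norm_real, Real.norm_of_nonneg (hχ01 z).1]
      exact (mul_le_of_le_one_left (norm_nonneg _) (hχ01 z).2).trans (hfM z hz)
  · exact (hf.mono (compl_subset_compl.2 (self_subset_cthickening F))).congr hχE
  · filter_upwards [hF.cthickening.compl_mem_cocompact] with z hz using hχE z hz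

theorem norm_mul_add_mul_sq_le {p q w : ℂ} (hw : ‖w‖ ≤ 1) : ‖p * w + q * w ^ 2‖ ≤ ‖p‖ + ‖q‖ := by
  have hw2 : ‖w ^ 2‖ ≤ 1 := by rw [norm_pow]; exact pow_le_one₀ (norm_nonneg w) hw
  calc ‖p * w + q * w ^ 2‖ ≤ ‖p‖ * ‖w‖ + ‖q‖ * ‖w ^ 2‖ := by
        rw [← norm_mul, ← norm_mul]; exact norm_add_le _ _
    _ ≤ ‖p‖ + ‖q‖ := add_le_add (mul_le_of_le_one_right (norm_nonneg p) hw)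
        (mul_le_of_le_one_right (norm_nonneg q) hw2)

theorem tendsto_sub_mul_sub_mul_add_mul_sq {g : ℂ → ℂ} {l : Filter ℂ} {a b c : ℂ} (p q : ℂ)
    (ha : Tendsto (fun z => (z - c) * g z) l (𝓝 a))
    (hb : Tendsto (fun z => (z - c) * ((z - c) * g z - a)) l (𝓝 b)) :
    Tendsto (fun z => (z - c) * ((z - c) * (p * g z + q * g z ^ 2) - p * a)) l
      (𝓝 (p * b + q * a ^ 2)) :=
  ((hb.const_mul p).add ((ha.pow 2).const_mul q)).congr fun z => by ring

theorem norm_div_add_norm_div_sq_le {ε d : ℝ} {a b α β : ℂ} (hε : 0 < ε) (hd : 0 < d)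
    (ha : ε * d / 2 < ‖a‖) (had : ‖a‖ ≤ d) (hb : ‖b‖ ≤ 2 * d ^ 2) (hα : ‖α‖ ≤ 1)
    (hβ : ‖β‖ ≤ 1) :
    ‖α * d / a‖ + ‖(β * d ^ 2 - α * d / a * b) / a ^ 2‖ ≤ 32 / ε ^ 3 := by
  have ha0 : 0 < ‖a‖ := (by positivity : 0 < ε * d / 2).trans ha
  set t := d / ‖a‖ with ht
  have hdt : d = t * ‖a‖ := (div_mul_cancel₀ d ha0.ne').symm
  have ht1 : 1 ≤ t := (one_le_div ha0).2 had
  have htε : t ≤ 2 / ε := by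
    rw [ht, div_le_div_iff₀ ha0 hε]
    linarith
  have hdn : ‖(d : ℂ)‖ = d := Complex.norm_of_nonneg hd.le
  have hp : ‖α * d / a‖ ≤ t := by
    rw [norm_div, norm_mul, hdn]
    exact div_le_div_of_nonneg_right (mul_le_of_le_one_left hd.le hα) ha0.le
  have hq : ‖(β * d ^ 2 - α * d / a * b) / a ^ 2‖ ≤ t ^ 2 + 2 * t ^ 3 := by
    have hnum : ‖β * d ^ 2 - α * d / a * b‖ ≤ d ^ 2 + t * (2 * d ^ 2) := by
      refine (norm_sub_le _ _).trans (add_le_add ?_ ?_)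
      · rw [norm_mul, norm_pow, hdn]
        exact mul_le_of_le_one_left (by positivity) hβ
      · rw [norm_mul]
        exact mul_le_mul hp hb (norm_nonneg b) (by positivity)
    rw [norm_div, norm_pow, div_le_iff₀ (by positivity)]
    calc _ ≤ d ^ 2 + t * (2 * d ^ 2) := hnum
      _ = (t ^ 2 + 2 * t ^ 3) * ‖a‖ ^ 2 := by rw [hdt]; ring
  calc ‖α * d / a‖ + ‖(β * d ^ 2 - α * d / a * b) / a ^ 2‖ ≤ t + (t ^ 2 + 2 * t ^ 3) :=
        add_le_add hp hq
    _ ≤ 4 * t ^ 3 := by nlinarith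
    _ ≤ 4 * (2 / ε) ^ 3 := by gcongr
    _ = 32 / ε ^ 3 := by ring

theorem stmt12 (ε₁ : ℝ) (hε₁ : 0 < ε₁) (K : Set ℂ) (hK : IsCompact K)
    (c : ℂ) (d : ℝ) (hd : 0 < d)
    (hcap : ε₁ * d ≤ analyticCapacity (interior (closedSquare c d) \ K))
    (α β : ℂ) (hα : ‖α‖ ≤ 1) (hβ : ‖β‖ ≤ 1) :
    ∃ f : ℂ → ℂ, Continuous f ∧
      (∀ z : ℂ, ‖f z‖ ≤ 54 / ε₁ ^ 3) ∧
      (∃ E : Set ℂ, IsCompact E ∧ E ⊆ interior (closedSquare c d) \ K ∧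
        DifferentiableOn ℂ f Eᶜ) ∧
      Tendsto f (cocompact ℂ) (nhds 0) ∧
      Tendsto (fun z => z * f z) (cocompact ℂ) (nhds (α * (d : ℂ))) ∧
      Tendsto (fun z => (z - c) * ((z - c) * f z - α * (d : ℂ)))
        (cocompact ℂ) (nhds (β * (d : ℂ) ^ 2)) := by
  obtain ⟨F, g, a, hFU, hg, ha⟩ := exists_isAdmissible_of_lt_analyticCapacity
    (lt_of_lt_of_le (half_lt_self (mul_pos hε₁ hd)) hcap)
  have hFd : F ⊆ closedBall c d :=
    hFU.trans <| sdiff_subset.trans <| interior_subset.trans <| closedSquare_subset_closedBall c d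
  obtain ⟨b, hb, hgb⟩ := hg.exists_tendsto_sub_mul_sub hFd hd
  have ha0 : a ≠ 0 := norm_pos_iff.1 ((by positivity : 0 < ε₁ * d / 2).trans ha)
  set p := α * d / a
  set q := (β * d ^ 2 - p * b) / a ^ 2
  have hpa : p * a = α * d := div_mul_cancel₀ _ ha0
  have hpq : p * b + q * a ^ 2 = β * d ^ 2 := by
    rw [div_mul_cancel₀ _ (pow_ne_zero 2 ha0)]; ring
  have hpq_le : ‖p‖ + ‖q‖ ≤ 54 / ε₁ ^ 3 :=
    (norm_div_add_norm_div_sq_le hε₁ hd ha (hg.norm_le hFd hd) hb hα hβ).trans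
      (by gcongr; norm_num)
  obtain ⟨f, hf, hfM, hfE, hf_eq⟩ := exists_continuous_differentiableOn_compl_eventuallyEq
    (f := fun z => p * g z + q * g z ^ 2) hg.isCompact (isOpen_interior.sdiff hK.isClosed) hFU
    ((hg.differentiableOn.const_mul p).add ((hg.differentiableOn.pow 2).const_mul q))
    (by positivity) fun z hz => (norm_mul_add_mul_sq_le (hg.norm_le_one z hz)).trans hpq_le
  refine ⟨f, hf, hfM, hfE, (hg.tendsto_mul_add_mul_sq p q).congr' hf_eq.symm, ?_, ?_⟩
  · rw [← hpa]
    exact (hg.tendsto_mul_mul_add_mul_sq p q).congr' (hf_eq.mono fun z hz => by simp only [hz])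
  · rw [← hpq, ← hpa]
    exact (tendsto_sub_mul_sub_mul_add_mul_sq p q (hg.tendsto_sub_mul c) hgb).congr'
      (hf_eq.mono fun z hz => by simp only [hz])
end
end

section
/- Let K₀ be a compact subset of the open unit disk B(0,1) with empty interior, and let G = B(0,1) ∖ K₀. Then there exist a sequence of points z_k ∈ G and radii r_k > 0 such that: the closed disks B̄(z_k, r_k) are pairwise disjoint and contained in G; ∑_{k=1}^{∞} r_k < ∞; every point of K₀ is the limit of some subsequence of (z_k); and no point of G is the limit of any subsequence of (z_k). -/
/-!
Since `K₀` has empty interior, it lies in the frontier of `G = B(0,1) ∖ K₀`. Take a sequence `t`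
in this frontier whose cluster points form the whole frontier (a countable dense subset,
enumerated so that every point recurs infinitely often). Choose recursively closed disks of radius
`≤ 2⁻ᵏ` in `G` with centre within `2⁻ᵏ` of `t k`, avoiding the disks already chosen: this is
possible because `t k` lies in the closure of `G` but outside their union, a closed subset of `G`.
The centres have the same cluster points as `t`, namely the frontier of `G`, which misses `G`,
and the radii are summable.
-/

open Metric Filter Set Topology TopologicalSpace Function

theorem exists_dist_lt_closedBall_subset_of_mem_closure {X : Type*} [PseudoMetricSpace X]
    {V : Set X} (hV : IsOpen V) {x : X} (hx : x ∈ closure V) {ε : ℝ} (hε : 0 < ε) :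
    ∃ (z : X) (r : ℝ), dist z x < ε ∧ 0 < r ∧ r ≤ ε ∧ closedBall z r ⊆ V := by
  obtain ⟨z, hzV, hxz⟩ := Metric.mem_closure_iff.1 hx ε hε
  obtain ⟨ρ, hρ, hρV⟩ := nhds_basis_closedBall.mem_iff.1 (hV.mem_nhds hzV)
  exact ⟨z, min ρ ε, by rwa [dist_comm], lt_min hρ hε, min_le_right _ _,
    (closedBall_subset_closedBall (min_le_left _ _)).trans hρV⟩

theorem IsOpen.exists_pairwise_disjoint_closedBall_near_frontier {X : Type*}
    [PseudoMetricSpace X] {G : Set X} (hG : IsOpen G) {t : ℕ → X} (ht : ∀ k, t k ∈ frontier G)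
    {ε : ℕ → ℝ} (hε : ∀ k, 0 < ε k) :
    ∃ (z : ℕ → X) (r : ℕ → ℝ),
      (∀ k, dist (z k) (t k) < ε k ∧ 0 < r k ∧ r k ≤ ε k ∧
        closedBall (z k) (r k) ⊆ G) ∧
      Pairwise (Disjoint on fun k => closedBall (z k) (r k)) := by
  rw [hG.frontier_eq] at ht
  have hnear : ∀ k (C : {C : Set X // IsClosed C ∧ C ⊆ G}), ∃ (z : X) (r : ℝ),
      dist z (t k) < ε k ∧ 0 < r ∧ r ≤ ε k ∧ closedBall z r ⊆ G \ C.1 := by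
    intro k C
    have htC : t k ∈ closure (G \ C.1) := by
      rw [sdiff_eq, inter_comm]
      exact C.2.1.isOpen_compl.inter_closure ⟨fun h => (ht k).2 (C.2.2 h), (ht k).1⟩
    exact exists_dist_lt_closedBall_subset_of_mem_closure (hG.sdiff C.2.1) htC (hε k)
  choose c ρ hcρ using hnear
  -- `U k` is the union of the disks chosen before step `k`
  obtain ⟨U, hU⟩ : ∃ U : ℕ → {C : Set X // IsClosed C ∧ C ⊆ G},
      ∀ k, (U (k + 1)).1 = (U k).1 ∪ closedBall (c k (U k)) (ρ k (U k)) :=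
    ⟨fun n => Nat.rec ⟨∅, isClosed_empty, empty_subset _⟩ (fun k C =>
      ⟨C.1 ∪ closedBall (c k C) (ρ k C), C.2.1.union isClosed_closedBall,
        union_subset C.2.2 ((hcρ k C).2.2.2.trans sdiff_subset)⟩) n, fun _ => rfl⟩
  have hUmono : Monotone fun k => (U k).1 :=
    monotone_nat_of_le_succ fun k => hU k ▸ subset_union_left
  have hdisj_lt : ∀ j k, j < k → Disjoint (closedBall (c j (U j)) (ρ j (U j)))
      (closedBall (c k (U k)) (ρ k (U k))) := fun j k hjk =>
    Disjoint.mono_left ((hU j ▸ subset_union_right).trans (hUmono hjk))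
      (disjoint_sdiff_right.mono_right (hcρ k (U k)).2.2.2)
  refine ⟨fun k => c k (U k), fun k => ρ k (U k), fun k => ?_, fun j k hjk => ?_⟩
  · obtain ⟨hdist, hpos, hle, hsub⟩ := hcρ k (U k)
    exact ⟨hdist, hpos, hle, hsub.trans sdiff_subset⟩
  · rcases hjk.lt_or_gt with h | h
    exacts [hdisj_lt j k h, (hdisj_lt k j h).symm]

theorem TopologicalSpace.IsSeparable.exists_seq_mapClusterPt {X : Type*} [TopologicalSpace X]
    [PseudoMetrizableSpace X] {s : Set X} (hs : IsSeparable s) (hne : s.Nonempty) :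
    ∃ u : ℕ → X, (∀ n, u n ∈ s) ∧ ∀ x ∈ s, MapClusterPt x atTop u := by
  obtain ⟨c, hcs, hc, hsc⟩ := hs.exists_countable_dense_subset
  obtain ⟨d, rfl⟩ := hc.exists_eq_range (closure_nonempty_iff.1 (hne.mono hsc))
  -- `d m` is visited at every index `Nat.pair m N`
  refine ⟨fun n => d n.unpair.1, fun n => hcs (mem_range_self _), fun x hx => ?_⟩
  rw [mapClusterPt_iff_frequently]
  intro V hV
  obtain ⟨_, hmV, m, rfl⟩ := mem_closure_iff_nhds.1 (hsc hx) V hV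
  exact frequently_atTop.2 fun N =>
    ⟨Nat.pair m N, Nat.right_le_pair m N, by simpa only [Nat.unpair_pair] using hmV⟩

theorem MapClusterPt.of_dist_tendsto_zero {X : Type*} [PseudoMetricSpace X] {x : X}
    {u v : ℕ → X} (hu : MapClusterPt x atTop u)
    (h : Tendsto (fun n => dist (u n) (v n)) atTop (𝓝 0)) : MapClusterPt x atTop v := by
  obtain ⟨φ, hφ, hlim⟩ := hu.tendsto_subseq
  exact .of_comp hφ.tendsto_atTop (hlim.congr_dist (h.comp hφ.tendsto_atTop)).mapClusterPt

theorem IsOpen.exists_pairwise_disjoint_closedBall_mapClusterPt_iff_mem_frontier {X : Type*}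
    [PseudoMetricSpace X] [SeparableSpace X] {G : Set X} (hG : IsOpen G)
    (hfr : (frontier G).Nonempty) :
    ∃ (z : ℕ → X) (r : ℕ → ℝ),
      (∀ k, 0 < r k ∧ r k ≤ 2⁻¹ ^ k ∧ closedBall (z k) (r k) ⊆ G) ∧
      Pairwise (Disjoint on fun k => closedBall (z k) (r k)) ∧
      ∀ w, MapClusterPt w atTop z ↔ w ∈ frontier G := by
  obtain ⟨t, htG, ht⟩ := (IsSeparable.of_separableSpace _).exists_seq_mapClusterPt hfr
  obtain ⟨z, r, hzr, hdisj⟩ :=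
    hG.exists_pairwise_disjoint_closedBall_near_frontier htG (ε := fun k => (2⁻¹ : ℝ) ^ k)
      fun k => by positivity
  have hdist : Tendsto (fun k => dist (z k) (t k)) atTop (𝓝 0) :=
    squeeze_zero (fun _ => dist_nonneg) (fun k => (hzr k).1.le)
      (tendsto_pow_atTop_nhds_zero_of_lt_one (by norm_num) (by norm_num))
  refine ⟨z, r, fun k => (hzr k).2, hdisj, fun w => ⟨fun hw => ?_, fun hw => ?_⟩⟩
  · exact isClosed_frontier.mem_of_mapClusterPt (hw.of_dist_tendsto_zero hdist)
      (Eventually.of_forall htG)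
  · exact (ht w hw).of_dist_tendsto_zero (by simpa only [dist_comm] using hdist)

theorem IsOpen.subset_closure_diff_of_interior_eq_empty {X : Type*} [TopologicalSpace X]
    {U K : Set X} (hU : IsOpen U) (hK : interior K = ∅) : U ⊆ closure (U \ K) :=
  (interior_eq_empty_iff_dense_compl.1 hK).open_subset_closure_inter hU

theorem stmt17 (K₀ : Set ℂ) (hK : IsCompact K₀) (hsub : K₀ ⊆ ball 0 1)
    (hint : interior K₀ = ∅) :
    ∃ (z : ℕ → ℂ) (r : ℕ → ℝ),
      (∀ k, 0 < r k) ∧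
      (∀ j k, j ≠ k → Disjoint (closedBall (z j) (r j)) (closedBall (z k) (r k))) ∧
      (∀ k, closedBall (z k) (r k) ⊆ ball 0 1 \ K₀) ∧
      Summable r ∧
      (∀ w ∈ K₀, ∃ φ : ℕ → ℕ, StrictMono φ ∧ Tendsto (z ∘ φ) atTop (nhds w)) ∧
      (∀ w ∈ ball 0 1 \ K₀,
        ¬ ∃ φ : ℕ → ℕ, StrictMono φ ∧ Tendsto (z ∘ φ) atTop (nhds w)) := by
  set G := ball (0 : ℂ) 1 \ K₀
  have hG : IsOpen G := isOpen_ball.sdiff hK.isClosed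
  have hdense : ball (0 : ℂ) 1 ⊆ closure G :=
    isOpen_ball.subset_closure_diff_of_interior_eq_empty hint
  have hKfr : K₀ ⊆ frontier G := fun w hw =>
    ⟨hdense (hsub hw), fun h => (interior_subset h).2 hw⟩
  have h1fr : (1 : ℂ) ∈ frontier G :=
    ⟨closure_minimal hdense isClosed_closure (by simp [closure_ball]),
      fun h => by simpa using (interior_subset h).1⟩
  obtain ⟨z, r, hzr, hdisj, hclu⟩ :=
    hG.exists_pairwise_disjoint_closedBall_mapClusterPt_iff_mem_frontier ⟨1, h1fr⟩
  refine ⟨z, r, fun k => (hzr k).1, fun j k hjk => hdisj hjk, fun k => (hzr k).2.2, ?_,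
    fun w hw => ((hclu w).2 (hKfr hw)).tendsto_subseq, ?_⟩
  · exact Summable.of_nonneg_of_le (fun k => (hzr k).1.le) (fun k => (hzr k).2.1)
      (summable_geometric_of_lt_one (by norm_num) (by norm_num))
  · rintro w hw ⟨φ, hφ, hlim⟩
    have hwfr := (hclu w).1 (hlim.mapClusterPt.of_comp hφ.tendsto_atTop)
    exact (hG.frontier_eq ▸ hwfr).2 hw
end
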